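/- arXiv:2211.17047 — 3 statements merged into one kernel-verified Lean document; each statement's English description precedes it below -/
import Mathlib

section
/- Let N≥3 be an integer, s∈(0,2) and λ₁,λ₂∈(0,Λ_N). Then the inequalities 2𝔠(λ₂,s)>𝔠(λ₁,s)>𝔠(λ₂,s) hold if and only if λ₂>λ₁ and (Λ_N−λ₂)/(Λ_N−λ₁) > 2^{−2(2−s)/(2(N−1)−s)}. -/
open MeasureTheory Filter Metric
open scoped RealInnerProductSpace ENNReal Topology

noncomputable section

abbrev Eucl (N : ℕ) : Type := EuclideanSpace ℝ (Fin N)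

def lamN (N : ℕ) : ℝ := ((N : ℝ) - 2) ^ 2 / 4

def twoStar (N : ℕ) (s : ℝ) : ℝ := 2 * ((N : ℝ) - s) / ((N : ℝ) - 2)

/-- An element of `D^{1,2}(ℝ^N)`: a function in `L^{2N/(N-2)}` together with its
weak gradient, which lies in `L²`. -/
structure D12 (N : ℕ) where
  u : Eucl N → ℝ
  grad : Eucl N → Eucl N
  u_memLp : MemLp u (ENNReal.ofReal (2 * N / ((N : ℝ) - 2))) volume
  grad_memLp : MemLp grad 2 volume
  weak_grad : ∀ (i : Fin N) (φ : Eucl N → ℝ), ContDiff ℝ (⊤ : ℕ∞) φ → HasCompactSupport φ →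
    ∫ x, u x * fderiv ℝ φ x (EuclideanSpace.single i 1) = - ∫ x, grad x i * φ x

def IsTest (N : ℕ) (φ : Eucl N → ℝ) : Prop :=
  ContDiff ℝ (⊤ : ℕ∞) φ ∧ HasCompactSupport φ

def normLamSq (N : ℕ) (lam : ℝ) (f : D12 N) : ℝ :=
  (∫ x, ‖f.grad x‖ ^ 2) - lam * ∫ x, (f.u x) ^ 2 / ‖x‖ ^ 2

def normDSq (N : ℕ) (lam1 lam2 : ℝ) (p : D12 N × D12 N) : ℝ :=
  normLamSq N lam1 p.1 + normLamSq N lam2 p.2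

def diffNormDSq (N : ℕ) (lam1 lam2 : ℝ) (p q : D12 N × D12 N) : ℝ :=
  ((∫ x, ‖p.1.grad x - q.1.grad x‖ ^ 2) - lam1 * ∫ x, (p.1.u x - q.1.u x) ^ 2 / ‖x‖ ^ 2)
    + ((∫ x, ‖p.2.grad x - q.2.grad x‖ ^ 2) - lam2 * ∫ x, (p.2.u x - q.2.u x) ^ 2 / ‖x‖ ^ 2)

def critInt (N : ℕ) (s : ℝ) (f : D12 N) : ℝ :=
  ∫ x, |f.u x| ^ (twoStar N s) / ‖x‖ ^ s

def couplingInt (N : ℕ) (s α β : ℝ) (h : Eucl N → ℝ) (p : D12 N × D12 N) : ℝ :=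
  ∫ x, h x * |p.1.u x| ^ α * |p.2.u x| ^ β / ‖x‖ ^ s

/-- The energy functional `J_ν`. -/
def Jnu (N : ℕ) (s lam1 lam2 α β ν : ℝ) (h : Eucl N → ℝ) (p : D12 N × D12 N) : ℝ :=
  (1 / 2) * normDSq N lam1 lam2 p
    - (1 / twoStar N s) * (critInt N s p.1 + critInt N s p.2)
    - ν * couplingInt N s α β h p

/-- The pairing `⟨J_ν'(u,v),(φ,ψ)⟩`. -/
def pairing (N : ℕ) (s lam1 lam2 α β ν : ℝ) (h : Eucl N → ℝ) (p : D12 N × D12 N)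
    (φ ψ : Eucl N → ℝ) : ℝ :=
  (∫ x, (⟪p.1.grad x, gradient φ x⟫ + ⟪p.2.grad x, gradient ψ x⟫))
    - lam1 * ∫ x, p.1.u x * φ x / ‖x‖ ^ 2
    - lam2 * ∫ x, p.2.u x * ψ x / ‖x‖ ^ 2
    - ∫ x, (|p.1.u x| ^ (twoStar N s - 2) * p.1.u x * φ x
        + |p.2.u x| ^ (twoStar N s - 2) * p.2.u x * ψ x) / ‖x‖ ^ s
    - ν * ∫ x, h x * (α * |p.1.u x| ^ (α - 2) * p.1.u x * |p.2.u x| ^ β * φ x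
        + β * |p.1.u x| ^ α * |p.2.u x| ^ (β - 2) * p.2.u x * ψ x) / ‖x‖ ^ s

def IsCritical (N : ℕ) (s lam1 lam2 α β ν : ℝ) (h : Eucl N → ℝ) (p : D12 N × D12 N) : Prop :=
  ∀ φ ψ : Eucl N → ℝ, IsTest N φ → IsTest N ψ → pairing N s lam1 lam2 α β ν h p φ ψ = 0

def Nontriv (N : ℕ) (p : D12 N × D12 N) : Prop :=
  ¬ (p.1.u =ᵐ[volume] (fun _ => (0 : ℝ)) ∧ p.2.u =ᵐ[volume] (fun _ => (0 : ℝ)))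

/-- Ground state: nontrivial nonnegative critical point of minimal energy among all
nontrivial nonnegative critical points. -/
def IsGroundState (N : ℕ) (s lam1 lam2 α β ν : ℝ) (h : Eucl N → ℝ) (p : D12 N × D12 N) : Prop :=
  IsCritical N s lam1 lam2 α β ν h p ∧ Nontriv N p ∧
    (∀ᵐ x ∂volume, 0 ≤ p.1.u x) ∧ (∀ᵐ x ∂volume, 0 ≤ p.2.u x) ∧
    ∀ q : D12 N × D12 N, IsCritical N s lam1 lam2 α β ν h q → Nontriv N q →
      (∀ᵐ x ∂volume, 0 ≤ q.1.u x) → (∀ᵐ x ∂volume, 0 ≤ q.2.u x) →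
      Jnu N s lam1 lam2 α β ν h p ≤ Jnu N s lam1 lam2 α β ν h q

def IsPositiveGroundState (N : ℕ) (s lam1 lam2 α β ν : ℝ) (h : Eucl N → ℝ)
    (p : D12 N × D12 N) : Prop :=
  IsGroundState N s lam1 lam2 α β ν h p ∧
    (∀ᵐ x ∂volume, 0 < p.1.u x) ∧ (∀ᵐ x ∂volume, 0 < p.2.u x)

/-- `h ∈ L^∞(ℝ^N)`, `h ≥ 0`, `h ≢ 0`. -/
def Hadm (N : ℕ) (h : Eucl N → ℝ) : Prop :=
  Measurable h ∧ (∀ x, 0 ≤ h x) ∧ (∃ C : ℝ, ∀ x, h x ≤ C) ∧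
    ¬ (h =ᵐ[volume] (fun _ => (0 : ℝ)))

/-- Hypothesis (H). -/
def HypH (N : ℕ) (h : Eucl N → ℝ) : Prop :=
  (∃ ε > (0 : ℝ), ContinuousOn h (ball (0 : Eucl N) ε)) ∧
    (∃ R : ℝ, ContinuousOn h {x : Eucl N | R ≤ ‖x‖}) ∧
    h 0 = 0 ∧ Tendsto h (cocompact (Eucl N)) (𝓝 0)

def Sconst (N : ℕ) (lam s : ℝ) : ℝ :=
  4 * (lamN N - lam) * (((N : ℝ) - s) / ((N : ℝ) - 2)) *
    ((((N : ℝ) - 2) / (2 * (2 - s) * Real.sqrt (lamN N - lam)))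
        * (2 * Real.pi ^ ((N : ℝ) / 2) / Real.Gamma ((N : ℝ) / 2))
        * (Real.Gamma (((N : ℝ) - s) / (2 - s)) ^ 2 / Real.Gamma (2 * ((N : ℝ) - s) / (2 - s))))
      ^ ((2 - s) / ((N : ℝ) - s))

def cLevel (N : ℕ) (lam s : ℝ) : ℝ :=
  ((2 - s) / (2 * ((N : ℝ) - s))) * Sconst N lam s ^ (((N : ℝ) - s) / (2 - s))

def aLam (N : ℕ) (lam : ℝ) : ℝ := Real.sqrt (lamN N) - Real.sqrt (lamN N - lam)

def Aconst (N : ℕ) (s lam : ℝ) : ℝ := 2 * (lamN N - lam) * (((N : ℝ) - s) / Real.sqrt (lamN N))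

def z1 (N : ℕ) (s lam : ℝ) (x : Eucl N) : ℝ :=
  Aconst N s lam ^ (((N : ℝ) - 2) / (2 * (2 - s))) /
    (‖x‖ ^ (aLam N lam) *
      (1 + ‖x‖ ^ ((2 - s) * (1 - 2 * aLam N lam / ((N : ℝ) - 2)))) ^ (((N : ℝ) - 2) / (2 - s)))

def zMu (N : ℕ) (s lam μ : ℝ) (x : Eucl N) : ℝ :=
  μ ^ (-(((N : ℝ) - 2) / 2)) * z1 N s lam (μ⁻¹ • x)

def TestNormSq (N : ℕ) (lam1 lam2 : ℝ) (φ ψ : Eucl N → ℝ) : ℝ :=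
  ((∫ x, ‖gradient φ x‖ ^ 2) - lam1 * ∫ x, (φ x) ^ 2 / ‖x‖ ^ 2)
    + ((∫ x, ‖gradient ψ x‖ ^ 2) - lam2 * ∫ x, (ψ x) ^ 2 / ‖x‖ ^ 2)

/-- Palais–Smale sequence for `J_ν` at level `c`. -/
def IsPSSeq (N : ℕ) (s lam1 lam2 α β ν : ℝ) (h : Eucl N → ℝ)
    (seq : ℕ → D12 N × D12 N) (c : ℝ) : Prop :=
  Tendsto (fun n => Jnu N s lam1 lam2 α β ν h (seq n)) atTop (𝓝 c) ∧
    ∀ δ : ℝ, 0 < δ → ∀ᶠ n in atTop, ∀ φ ψ : Eucl N → ℝ, IsTest N φ → IsTest N ψ →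
      TestNormSq N lam1 lam2 φ ψ ≤ 1 → |pairing N s lam1 lam2 α β ν h (seq n) φ ψ| ≤ δ

/-- Strong convergence (of a subsequence handled outside) in `𝔻`. -/
def TendstoD (N : ℕ) (lam1 lam2 : ℝ) (seq : ℕ → D12 N × D12 N) (p : D12 N × D12 N) : Prop :=
  Tendsto (fun n => diffNormDSq N lam1 lam2 (seq n) p) atTop (𝓝 0)

/-! The level `𝔠(λ, s)` is a positive constant times `(Λ_N - λ) ^ ((2(N-1) - s) / (2(2-s)))`,
a strictly increasing function of `Λ_N - λ`. So `𝔠(λ₂, s) < 𝔠(λ₁, s)` says `λ₁ < λ₂`, and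
`𝔠(λ₁, s) < 2 𝔠(λ₂, s)` becomes, after taking the power `(2(2-s)) / (2(N-1) - s)`, the stated
bound on `(Λ_N - λ₂) / (Λ_N - λ₁)`. -/

theorem Real.rpow_mul_div_sqrt_rpow_inv {c t B p : ℝ} (hc : 0 ≤ c) (ht : 0 < t) (hB : 0 ≤ B)
    (hp : p ≠ 0) :
    (c * t * (B / √t) ^ p⁻¹) ^ p = c ^ p * B * t ^ (p - 1 / 2) := by
  have hBt : 0 ≤ B / √t := div_nonneg hB (Real.sqrt_nonneg t)
  rw [Real.mul_rpow (by positivity) (Real.rpow_nonneg hBt _), Real.mul_rpow hc ht.le,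
    ← Real.rpow_mul hBt, inv_mul_cancel₀ hp, Real.rpow_one, Real.rpow_sub ht,
    Real.sqrt_eq_rpow]
  ring

theorem Real.rpow_lt_mul_rpow_iff {a b k e : ℝ} (ha : 0 < a) (hb : 0 ≤ b) (hk : 0 < k)
    (he : 0 < e) : a ^ e < k * b ^ e ↔ k ^ (-e⁻¹) < b / a := by
  have hk' : 0 < k ^ e⁻¹ := Real.rpow_pos_of_pos hk _
  have hpow : k * b ^ e = (k ^ e⁻¹ * b) ^ e := by
    rw [Real.mul_rpow hk'.le hb, ← Real.rpow_mul hk.le, inv_mul_cancel₀ he.ne', Real.rpow_one]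
  rw [hpow, Real.rpow_lt_rpow_iff ha.le (by positivity) he, lt_div_iff₀ ha, Real.rpow_neg hk.le,
    ← div_eq_inv_mul, div_lt_iff₀' hk']

/-- The factor of `S(λ, s)` that does not depend on `λ`, once `√(Λ_N - λ)` is taken out. -/
def gammaFactor (N : ℕ) (s : ℝ) : ℝ :=
  ((N : ℝ) - 2) / (2 * (2 - s)) * (2 * Real.pi ^ ((N : ℝ) / 2) / Real.Gamma ((N : ℝ) / 2)) *
    (Real.Gamma (((N : ℝ) - s) / (2 - s)) ^ 2 / Real.Gamma (2 * ((N : ℝ) - s) / (2 - s)))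

def cLevelCoeff (N : ℕ) (s : ℝ) : ℝ :=
  (2 - s) / (2 * ((N : ℝ) - s)) *
    (4 * (((N : ℝ) - s) / ((N : ℝ) - 2))) ^ (((N : ℝ) - s) / (2 - s)) * gammaFactor N s

def cLevelExponent (N : ℕ) (s : ℝ) : ℝ := (2 * ((N : ℝ) - 1) - s) / (2 * (2 - s))

section

variable {N : ℕ} {s : ℝ}

theorem gammaFactor_pos (hN : 3 ≤ N) (hs : s < 2) : 0 < gammaFactor N s := by
  have hn : (3 : ℝ) ≤ N := by exact_mod_cast hN
  have hG {x : ℝ} (hx : 0 < x) : 0 < Real.Gamma x := Real.Gamma_pos_of_pos hx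
  have h2s : 0 < 2 - s := by linarith
  unfold gammaFactor
  have := hG (x := ((N : ℝ) - s) / (2 - s)) (by apply div_pos <;> linarith)
  have := hG (x := 2 * ((N : ℝ) - s) / (2 - s)) (by apply div_pos <;> linarith)
  have := hG (x := (N : ℝ) / 2) (by linarith)
  have := Real.rpow_pos_of_pos Real.pi_pos ((N : ℝ) / 2)
  have : 0 < (N : ℝ) - 2 := by linarith
  positivity

theorem cLevelCoeff_pos (hN : 3 ≤ N) (hs : s < 2) : 0 < cLevelCoeff N s := by
  have hn : (3 : ℝ) ≤ N := by exact_mod_cast hN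
  have : 0 < 2 - s := by linarith
  have : 0 < (N : ℝ) - s := by linarith
  have : 0 < (N : ℝ) - 2 := by linarith
  have := gammaFactor_pos hN hs
  unfold cLevelCoeff
  positivity

theorem cLevelExponent_pos (hN : 3 ≤ N) (hs : s < 2) : 0 < cLevelExponent N s := by
  have hn : (3 : ℝ) ≤ N := by exact_mod_cast hN
  unfold cLevelExponent
  apply div_pos <;> linarith

theorem cLevel_eq {lam : ℝ} (hN : 3 ≤ N) (hs : s < 2) (hlam : lam < lamN N) :
    cLevel N lam s = cLevelCoeff N s * (lamN N - lam) ^ cLevelExponent N s := by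
  have hn : (3 : ℝ) ≤ N := by exact_mod_cast hN
  have h2s : 0 < 2 - s := by linarith
  have hns : 0 < (N : ℝ) - s := by linarith
  have hn2 : 0 < (N : ℝ) - 2 := by linarith
  have ht : 0 < lamN N - lam := sub_pos.2 hlam
  have hS : Sconst N lam s = 4 * (((N : ℝ) - s) / ((N : ℝ) - 2)) * (lamN N - lam) *
      (gammaFactor N s / √(lamN N - lam)) ^ (((N : ℝ) - s) / (2 - s))⁻¹ := by
    have hbracket : ((N : ℝ) - 2) / (2 * (2 - s) * √(lamN N - lam)) *
        (2 * Real.pi ^ ((N : ℝ) / 2) / Real.Gamma ((N : ℝ) / 2)) *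
        (Real.Gamma (((N : ℝ) - s) / (2 - s)) ^ 2 / Real.Gamma (2 * ((N : ℝ) - s) / (2 - s))) =
        gammaFactor N s / √(lamN N - lam) := by
      rw [gammaFactor, ← div_div]
      ring
    rw [Sconst, hbracket, inv_div]
    ring
  have hexp : cLevelExponent N s = ((N : ℝ) - s) / (2 - s) - 1 / 2 := by
    unfold cLevelExponent
    field_simp
    ring
  rw [cLevel, hS, Real.rpow_mul_div_sqrt_rpow_inv (by positivity) ht
    (gammaFactor_pos hN hs).le (by positivity), hexp, cLevelCoeff]
  ring

end

theorem statement5_general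
    (N : ℕ) (hN : 3 ≤ N) (s : ℝ) (hs2 : s < 2)
    (lam1 lam2 : ℝ) (hl1' : lam1 < lamN N)
    (hl2' : lam2 < lamN N) :
    (cLevel N lam2 s < cLevel N lam1 s ∧ cLevel N lam1 s < 2 * cLevel N lam2 s) ↔
      (lam1 < lam2 ∧
        (2 : ℝ) ^ (-(2 * (2 - s)) / (2 * ((N : ℝ) - 1) - s)) <
          (lamN N - lam2) / (lamN N - lam1)) := by
  have hE := cLevelCoeff_pos hN hs2
  have he := cLevelExponent_pos hN hs2
  have ht1 : 0 < lamN N - lam1 := sub_pos.2 hl1'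
  have ht2 : 0 < lamN N - lam2 := sub_pos.2 hl2'
  have hexp : -(2 * (2 - s)) / (2 * ((N : ℝ) - 1) - s) = -(cLevelExponent N s)⁻¹ := by
    rw [cLevelExponent, inv_div, neg_div]
  rw [cLevel_eq hN hs2 hl1', cLevel_eq hN hs2 hl2', mul_left_comm, hexp,
    mul_lt_mul_iff_right₀ hE, mul_lt_mul_iff_right₀ hE, Real.rpow_lt_rpow_iff ht2.le ht1.le he,
    Real.rpow_lt_mul_rpow_iff ht1 ht2.le two_pos he, sub_lt_sub_iff_left]

theorem statement5
    (N : ℕ) (hN : 3 ≤ N) (s : ℝ) (hs0 : 0 < s) (hs2 : s < 2)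
    (lam1 lam2 : ℝ) (hl1 : 0 < lam1) (hl1' : lam1 < lamN N)
    (hl2 : 0 < lam2) (hl2' : lam2 < lamN N) :
    (cLevel N lam2 s < cLevel N lam1 s ∧ cLevel N lam1 s < 2 * cLevel N lam2 s) ↔
      (lam1 < lam2 ∧
        (2 : ℝ) ^ (-(2 * (2 - s)) / (2 * ((N : ℝ) - 1) - s)) <
          (lamN N - lam2) / (lamN N - lam1)) :=
  statement5_general N hN s hs2 lam1 lam2 hl1' hl2'
end
end

section
/- Let A,B>0 and θ≥2, and for ν>0 define Σ_ν = {σ>0 : A·σ^{2/2*_s} < σ + B·ν·σ^{θ/2*_s}}. Then for every ε∈(0,1) there exists ν̃>0 such that for every 0<ν<ν̃, every σ∈Σ_ν satisfies σ > (1−ε)·A^{(N−s)/(2−s)}. -/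
open MeasureTheory Filter Metric
open scoped RealInnerProductSpace ENNReal Topology

noncomputable section

/-!
Write `q = 2/2*_s = (N-2)/(N-s) < 1` and `p = θ/2*_s ≥ q`. If `σ ≤ M` then
`σ + Bνσ^p = σ^q (σ^(1-q) + Bνσ^(p-q)) ≤ σ^q (M^(1-q) + BνM^(p-q))`, which is `≤ Aσ^q` once
`M^(1-q) < A` and `ν` is small. For `M = (1-ε)A^((N-s)/(2-s))` one has `M^(1-q) = (1-ε)^(1-q) A < A`.
-/

namespace Real

lemma lt_of_mul_rpow_lt_add_mul_rpow {A b p q M σ : ℝ} (hσ : 0 < σ) (hq : q ≤ 1) (hqp : q ≤ p)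
    (hb : 0 ≤ b) (hMA : M ^ (1 - q) + b * M ^ (p - q) ≤ A)
    (h : A * σ ^ q < σ + b * σ ^ p) : M < σ := by
  by_contra! hσM
  have hσq : 0 < σ ^ q := rpow_pos_of_pos hσ q
  have hsplit : σ + b * σ ^ p = σ ^ q * (σ ^ (1 - q) + b * σ ^ (p - q)) := by
    rw [mul_add, ← rpow_add hσ, mul_left_comm, ← rpow_add hσ]
    simp
  have hbound : σ ^ (1 - q) + b * σ ^ (p - q) ≤ A :=
    le_trans (by gcongr : σ ^ (1 - q) + b * σ ^ (p - q) ≤ M ^ (1 - q) + b * M ^ (p - q)) hMA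
  have := mul_le_mul_of_nonneg_left hbound hσq.le
  linarith

lemma exists_pos_forall_lt_of_mul_rpow_lt_add_mul_rpow {A B p q M : ℝ} (hq : q ≤ 1)
    (hqp : q ≤ p) (hB : 0 ≤ B) (hMA : M ^ (1 - q) < A) :
    ∃ ν₀ : ℝ, 0 < ν₀ ∧ ∀ ν : ℝ, 0 < ν → ν < ν₀ → ∀ σ : ℝ, 0 < σ →
      A * σ ^ q < σ + B * ν * σ ^ p → M < σ := by
  have hcont : Tendsto (fun ν => M ^ (1 - q) + B * ν * M ^ (p - q)) (𝓝 0) (𝓝 (M ^ (1 - q))) :=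
    (by fun_prop : Continuous fun ν => M ^ (1 - q) + B * ν * M ^ (p - q)).tendsto' 0 _ (by simp)
  obtain ⟨ν₀, hν₀, hsmall⟩ := Metric.eventually_nhds_iff.mp (hcont.eventually (gt_mem_nhds hMA))
  refine ⟨ν₀, hν₀, fun ν hν hνν₀ σ hσ h => ?_⟩
  have hdist : dist ν 0 < ν₀ := by rwa [dist_0_eq_abs, abs_of_pos hν]
  exact lt_of_mul_rpow_lt_add_mul_rpow hσ hq hqp (by positivity) (hsmall hdist).le h

end Real

lemma twoStar_pos {N : ℕ} {s : ℝ} (hN : 2 < (N : ℝ)) (hs : s < N) : 0 < twoStar N s := by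
  unfold twoStar
  have : 0 < (N : ℝ) - 2 := by linarith
  have : 0 < (N : ℝ) - s := by linarith
  positivity

lemma one_sub_two_div_twoStar {N : ℕ} {s : ℝ} (hN : (N : ℝ) ≠ 2) (hs : (N : ℝ) ≠ s) :
    1 - 2 / twoStar N s = (2 - s) / (N - s) := by
  have : (N : ℝ) - 2 ≠ 0 := sub_ne_zero.mpr hN
  have : (N : ℝ) - s ≠ 0 := sub_ne_zero.mpr hs
  unfold twoStar
  field_simp
  ring

theorem statement8_general
    (N : ℕ) (hN : 3 ≤ N) (s : ℝ) (hs2 : s < 2)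
    (A B θ : ℝ) (hA : 0 < A) (hB : 0 < B) (hθ : 2 ≤ θ) :
    ∀ ε : ℝ, 0 < ε → ε < 1 → ∃ ν₀ : ℝ, 0 < ν₀ ∧ ∀ ν : ℝ, 0 < ν → ν < ν₀ →
      ∀ σ : ℝ, 0 < σ →
        A * σ ^ (2 / twoStar N s) < σ + B * ν * σ ^ (θ / twoStar N s) →
        (1 - ε) * A ^ (((N : ℝ) - s) / (2 - s)) < σ := by
  intro ε hε hε1
  have hN2 : (2 : ℝ) < N := by exact_mod_cast hN
  have hr : 0 < (2 - s) / ((N : ℝ) - s) := div_pos (by linarith) (by linarith)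
  have hq : 1 - 2 / twoStar N s = (2 - s) / (N - s) :=
    one_sub_two_div_twoStar hN2.ne' (by linarith)
  have hqp : 2 / twoStar N s ≤ θ / twoStar N s :=
    div_le_div_of_nonneg_right hθ (twoStar_pos hN2 (by linarith)).le
  have hMA : ((1 - ε) * A ^ (((N : ℝ) - s) / (2 - s))) ^ (1 - 2 / twoStar N s) < A := by
    rw [hq, ← inv_div, Real.mul_rpow (by linarith) (by positivity),
      Real.rpow_inv_rpow hA.le hr.ne']
    exact mul_lt_of_lt_one_left hA (Real.rpow_lt_one (by linarith) (by linarith) hr)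
  exact Real.exists_pos_forall_lt_of_mul_rpow_lt_add_mul_rpow (by linarith) hqp hB.le hMA

theorem statement8
    (N : ℕ) (hN : 3 ≤ N) (s : ℝ) (hs0 : 0 ≤ s) (hs2 : s < 2)
    (A B θ : ℝ) (hA : 0 < A) (hB : 0 < B) (hθ : 2 ≤ θ) :
    ∀ ε : ℝ, 0 < ε → ε < 1 → ∃ ν₀ : ℝ, 0 < ν₀ ∧ ∀ ν : ℝ, 0 < ν → ν < ν₀ →
      ∀ σ : ℝ, 0 < σ →
        A * σ ^ (2 / twoStar N s) < σ + B * ν * σ ^ (θ / twoStar N s) →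
        (1 - ε) * A ^ (((N : ℝ) - s) / (2 - s)) < σ :=
  statement8_general N hN s hs2 A B θ hA hB hθ
end
end

section
/- Let N≥3 be an integer, s∈(0,2), λ∈(0,Λ_N) and μ>0. The function z_μ^{λ,s} is smooth and strictly positive on ℝ^N∖{0} and satisfies, pointwise for every x∈ℝ^N∖{0}, the equation −Δz_μ^{λ,s}(x) − λ·z_μ^{λ,s}(x)/|x|² = (z_μ^{λ,s}(x))^{2*_s−1}/|x|^s. -/
open MeasureTheory Filter Metric
open scoped RealInnerProductSpace ENNReal Topology

noncomputable section

/-- The Laplacian: sum of the second partial derivatives. -/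
def laplacian (N : ℕ) (f : Eucl N → ℝ) (x : Eucl N) : ℝ :=
  ∑ i : Fin N, fderiv ℝ (fun y => fderiv ℝ f y (EuclideanSpace.single i 1)) x
    (EuclideanSpace.single i 1)

/-!
The function `z_μ` is radial, `z_μ x = G (‖x‖²)` with `G t = K t^(-a/2) q(t)^c`,
`q(t) = (1 + m t^d)⁻¹`, `c = (N-2)/(2-s)` and `d = (2-s)(1 - 2a/(N-2))/2`; the dilation by `μ`
only changes the constants `K` and `m`. For `f = G ∘ ‖·‖²` one has
`Δf = 4 t G''(t) + 2 N G'(t)` at `t = ‖x‖²`, and since `t q' = -d (1-q) q`, both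
`t² G''` and `t G'` are `G` times polynomials in `q`. So is `t^(1 - s/2) G^(2*_s - 1)`,
because `K^(2*_s - 2) = A m`. The equation thus becomes a polynomial identity in `q`: its constant
term vanishes because `a = a_λ` is a root of `a² - (N-2) a + λ = 0`, and its other coefficients
match by the choice of `A(N, λ)`.
-/

lemma sq_rpow_half {r : ℝ} (hr : 0 ≤ r) (y : ℝ) : (r ^ 2) ^ (y / 2) = r ^ y := by
  rw [← Real.rpow_two, ← Real.rpow_mul hr]
  ring_nf

lemma laplacian_congr_of_eventuallyEq {N : ℕ} {f g : Eucl N → ℝ} {x : Eucl N}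
    (h : f =ᶠ[𝓝 x] g) : laplacian N f x = laplacian N g x := by
  unfold laplacian
  refine Finset.sum_congr rfl fun i _ => ?_
  congr 1
  refine Filter.EventuallyEq.fderiv_eq ?_
  filter_upwards [h.fderiv (𝕜 := ℝ)] with y hy
  rw [hy]

lemma fderiv_comp_norm_sq_single {N : ℕ} {g : ℝ → ℝ} {g' : ℝ} {y : Eucl N}
    (hg : HasDerivAt g g' (‖y‖ ^ 2)) (i : Fin N) :
    fderiv ℝ (fun z : Eucl N => g (‖z‖ ^ 2)) y (EuclideanSpace.single i 1) = 2 * g' * y i := by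
  have hd := hg.comp_hasFDerivAt y (hasStrictFDerivAt_norm_sq y).hasFDerivAt
  rw [(show HasFDerivAt (fun z : Eucl N => g (‖z‖ ^ 2)) _ y from hd).fderiv]
  simp [EuclideanSpace.inner_single_right]
  ring

lemma laplacian_comp_norm_sq {N : ℕ} {g g' : ℝ → ℝ} {g'' : ℝ} {x : Eucl N}
    (hg : ∀ᶠ t in 𝓝 (‖x‖ ^ 2), HasDerivAt g (g' t) t) (hg' : HasDerivAt g' g'' (‖x‖ ^ 2)) :
    laplacian N (fun y => g (‖y‖ ^ 2)) x = 4 * ‖x‖ ^ 2 * g'' + 2 * N * g' (‖x‖ ^ 2) := by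
  have hnear : ∀ᶠ y in 𝓝 x, HasDerivAt g (g' (‖y‖ ^ 2)) (‖y‖ ^ 2) :=
    ((continuous_norm.pow 2).tendsto x).eventually hg
  have hsecond : ∀ i : Fin N,
      fderiv ℝ (fun y => fderiv ℝ (fun z : Eucl N => g (‖z‖ ^ 2)) y (EuclideanSpace.single i 1)) x
        (EuclideanSpace.single i 1) = 4 * g'' * (x i) ^ 2 + 2 * g' (‖x‖ ^ 2) := by
    intro i
    have hev : (fun y => fderiv ℝ (fun z : Eucl N => g (‖z‖ ^ 2)) y (EuclideanSpace.single i 1))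
        =ᶠ[𝓝 x] fun y => 2 * g' (‖y‖ ^ 2) * y i := by
      filter_upwards [hnear] with y hy
      exact fderiv_comp_norm_sq_single hy i
    have hd := ((hg'.comp_hasFDerivAt x (hasStrictFDerivAt_norm_sq x).hasFDerivAt).const_mul
      (2 : ℝ)).mul (EuclideanSpace.proj (𝕜 := ℝ) i).hasFDerivAt
    rw [hev.fderiv_eq,
      (show HasFDerivAt (fun y : Eucl N => 2 * g' (‖y‖ ^ 2) * y i) _ x from hd).fderiv]
    simp [EuclideanSpace.inner_single_right]
    ring
  rw [laplacian, Finset.sum_congr rfl fun i _ => hsecond i, Finset.sum_add_distrib,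
    ← Finset.mul_sum, EuclideanSpace.norm_sq_eq]
  simp only [Real.norm_eq_abs, sq_abs, Finset.sum_const, Finset.card_univ, Fintype.card_fin,
    nsmul_eq_mul]
  ring

section BubbleProfile

variable {K m e c d t : ℝ}

def bubbleFactor (m d t : ℝ) : ℝ := (1 + m * t ^ d)⁻¹

def bubbleProfile (K m e c d t : ℝ) : ℝ := K * t ^ e * bubbleFactor m d t ^ c

def bubbleProfileDeriv (K m e c d t : ℝ) : ℝ :=
  bubbleProfile K m e c d t * (e - c * d * (1 - bubbleFactor m d t)) / t

def bubbleProfileDeriv2 (K m e c d t : ℝ) : ℝ :=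
  bubbleProfile K m e c d t * ((e - c * d * (1 - bubbleFactor m d t)) ^ 2
    - (e - c * d * (1 - bubbleFactor m d t))
    - c * d ^ 2 * (1 - bubbleFactor m d t) * bubbleFactor m d t) / t ^ 2

lemma one_add_mul_rpow_pos (hm : 0 ≤ m) (ht : 0 < t) : 0 < 1 + m * t ^ d := by
  have := Real.rpow_pos_of_pos ht d
  positivity

lemma bubbleFactor_pos (hm : 0 ≤ m) (ht : 0 < t) : 0 < bubbleFactor m d t :=
  inv_pos.2 (one_add_mul_rpow_pos hm ht)

lemma bubbleProfile_pos (hK : 0 < K) (hm : 0 ≤ m) (ht : 0 < t) : 0 < bubbleProfile K m e c d t :=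
  mul_pos (mul_pos hK (Real.rpow_pos_of_pos ht e))
    (Real.rpow_pos_of_pos (bubbleFactor_pos hm ht) c)

lemma hasDerivAt_bubbleFactor (hm : 0 ≤ m) (ht : 0 < t) :
    HasDerivAt (bubbleFactor m d)
      (-d * (1 - bubbleFactor m d t) * bubbleFactor m d t / t) t := by
  have hP := one_add_mul_rpow_pos (d := d) hm ht
  have h := (((Real.hasDerivAt_rpow_const (p := d) (Or.inl ht.ne')).const_mul m).const_add 1).inv
    hP.ne'
  refine h.congr_deriv ?_
  rw [Real.rpow_sub_one ht.ne', bubbleFactor]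
  field_simp
  ring

lemma hasDerivAt_bubbleProfile (hm : 0 ≤ m) (ht : 0 < t) :
    HasDerivAt (bubbleProfile K m e c d) (bubbleProfileDeriv K m e c d t) t := by
  have hq := bubbleFactor_pos (d := d) hm ht
  have h := ((Real.hasDerivAt_rpow_const (p := e) (Or.inl ht.ne')).const_mul K).mul
    ((hasDerivAt_bubbleFactor (d := d) hm ht).rpow_const (p := c) (Or.inl hq.ne'))
  refine h.congr_deriv ?_
  rw [Real.rpow_sub_one ht.ne', Real.rpow_sub_one hq.ne', bubbleProfileDeriv, bubbleProfile]
  field_simp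
  ring

lemma hasDerivAt_bubbleProfileDeriv (hm : 0 ≤ m) (ht : 0 < t) :
    HasDerivAt (bubbleProfileDeriv K m e c d) (bubbleProfileDeriv2 K m e c d t) t := by
  have h := ((hasDerivAt_bubbleProfile (K := K) (e := e) (c := c) (d := d) hm ht).mul
    (((hasDerivAt_bubbleFactor (d := d) hm ht).const_sub 1).const_mul (c * d) |>.const_sub e)).div
    (hasDerivAt_id t) ht.ne'
  refine h.congr_deriv ?_
  simp only [bubbleProfileDeriv, bubbleProfileDeriv2, Pi.mul_apply, id]
  field_simp
  ring

lemma contDiffAt_bubbleProfile (hm : 0 ≤ m) (ht : 0 < t) :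
    ContDiffAt ℝ (⊤ : ℕ∞) (bubbleProfile K m e c d) t := by
  have hP := one_add_mul_rpow_pos (d := d) hm ht
  have hpow : ∀ p : ℝ, ContDiffAt ℝ (⊤ : ℕ∞) (fun u : ℝ => u ^ p) t :=
    fun p => Real.contDiffAt_rpow_const_of_ne ht.ne'
  exact (contDiffAt_const.mul (hpow e)).mul
    (((contDiffAt_const.add (contDiffAt_const.mul (hpow d))).inv hP.ne').rpow_const_of_ne
      (inv_pos.2 hP).ne')

lemma bubbleProfile_rpow_div {p A r : ℝ} (hK : 0 < K) (hm : 0 ≤ m) (ht : 0 < t)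
    (hKm : K ^ (p - 2) = A * m) (hc : c * (p - 2) = 2) (he : e * (p - 2) = d - 1 + r) :
    bubbleProfile K m e c d t ^ (p - 1) / t ^ r
      = A * (1 - bubbleFactor m d t) * bubbleFactor m d t * bubbleProfile K m e c d t / t := by
  have hq := bubbleFactor_pos (d := d) hm ht
  have hG := bubbleProfile_pos (e := e) (c := c) (d := d) hK hm ht
  have hpow : bubbleProfile K m e c d t ^ (p - 2)
      = A * m * (t ^ d * t⁻¹ * t ^ r) * bubbleFactor m d t ^ 2 := by
    rw [bubbleProfile, Real.mul_rpow (by positivity) (by positivity),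
      Real.mul_rpow hK.le (by positivity), ← Real.rpow_mul ht.le, ← Real.rpow_mul hq.le, hKm, hc,
      he, Real.rpow_add ht, Real.rpow_sub ht, Real.rpow_one, Real.rpow_two]
    ring
  have hfac : m * t ^ d * bubbleFactor m d t = 1 - bubbleFactor m d t := by
    have := one_add_mul_rpow_pos (d := d) hm ht
    rw [bubbleFactor]
    field_simp
    ring
  rw [show p - 1 = (p - 2) + 1 by ring, Real.rpow_add_one hG.ne', hpow, ← hfac]
  have := Real.rpow_pos_of_pos ht r
  field_simp

lemma bubbleProfile_ode {n s a lam : ℝ} (hn : n ≠ 2) (hs : s ≠ 2)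
    (he : e = -a / 2) (hc : c = (n - 2) / (2 - s)) (hd : d = (2 - s) * (1 - 2 * a / (n - 2)) / 2)
    (hlam : lam = a * (n - 2 - a)) (ht : 0 < t) :
    4 * t * bubbleProfileDeriv2 K m e c d t + 2 * n * bubbleProfileDeriv K m e c d t
        + lam * bubbleProfile K m e c d t / t
      = -((n - 2 - 2 * a) ^ 2 * (n - s) / (n - 2) * (1 - bubbleFactor m d t) * bubbleFactor m d t
          * bubbleProfile K m e c d t / t) := by
  have hn' : n - 2 ≠ 0 := sub_ne_zero.2 hn
  have hs' : 2 - s ≠ 0 := sub_ne_zero.2 (Ne.symm hs)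
  simp only [bubbleProfileDeriv2, bubbleProfileDeriv]
  subst he hc hd hlam
  field_simp
  ring

lemma bubbleProfile_radial_equation {n s a lam : ℝ} (hn : n ≠ 2) (hs : s ≠ 2)
    (he : e = -a / 2) (hc : c = (n - 2) / (2 - s)) (hd : d = (2 - s) * (1 - 2 * a / (n - 2)) / 2)
    (hlam : lam = a * (n - 2 - a)) (hK : 0 < K) (hm : 0 ≤ m) (ht : 0 < t)
    (hKm : K ^ (2 * (n - s) / (n - 2) - 2) = (n - 2 - 2 * a) ^ 2 * (n - s) / (n - 2) * m) :
    -(4 * t * bubbleProfileDeriv2 K m e c d t + 2 * n * bubbleProfileDeriv K m e c d t)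
        - lam * bubbleProfile K m e c d t / t
      = bubbleProfile K m e c d t ^ (2 * (n - s) / (n - 2) - 1) / t ^ (s / 2) := by
  have hn' : n - 2 ≠ 0 := sub_ne_zero.2 hn
  have hs' : 2 - s ≠ 0 := sub_ne_zero.2 (Ne.symm hs)
  rw [bubbleProfile_rpow_div hK hm ht hKm (by rw [hc]; field_simp; ring)
    (by rw [he, hd]; field_simp; ring)]
  linarith [bubbleProfile_ode (K := K) (m := m) hn hs he hc hd hlam ht]

lemma bubble_constant_rpow {n s a A μ : ℝ} (hn : n ≠ 2) (hs : s ≠ 2) (hA : 0 ≤ A) (hμ : 0 < μ) :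
    (A ^ ((n - 2) / (2 * (2 - s))) * μ ^ (a - (n - 2) / 2)) ^ (2 * (n - s) / (n - 2) - 2)
      = A * μ ^ (-((2 - s) * (1 - 2 * a / (n - 2)))) := by
  have hn' : n - 2 ≠ 0 := sub_ne_zero.2 hn
  have hs' : 2 - s ≠ 0 := sub_ne_zero.2 (Ne.symm hs)
  rw [Real.mul_rpow (by positivity) (by positivity), ← Real.rpow_mul hA, ← Real.rpow_mul hμ.le]
  rw [show (n - 2) / (2 * (2 - s)) * (2 * (n - s) / (n - 2) - 2) = 1 by field_simp; ring,
    show (a - (n - 2) / 2) * (2 * (n - s) / (n - 2) - 2) = -((2 - s) * (1 - 2 * a / (n - 2))) by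
      field_simp; ring, Real.rpow_one]

end BubbleProfile

lemma scaled_bubble_eq_bubbleProfile {μ r B k a b c : ℝ} (hμ : 0 < μ) (hr : 0 < r) :
    μ ^ (-k) * (B / ((μ⁻¹ * r) ^ a * (1 + (μ⁻¹ * r) ^ b) ^ c))
      = bubbleProfile (B * μ ^ (a - k)) (μ ^ (-b)) (-a / 2) c (b / 2) (r ^ 2) := by
  have hscale : ∀ y : ℝ, (μ⁻¹ * r) ^ y = μ ^ (-y) * r ^ y := fun y => by
    rw [Real.mul_rpow (inv_nonneg.2 hμ.le) hr.le, Real.inv_rpow hμ.le, Real.rpow_neg hμ.le]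
  have hP : 0 < 1 + μ ^ (-b) * r ^ b := by positivity
  rw [hscale, hscale, bubbleProfile, bubbleFactor, sq_rpow_half hr.le, sq_rpow_half hr.le,
    Real.rpow_neg hr.le, Real.inv_rpow hP.le, Real.rpow_sub hμ, Real.rpow_neg hμ.le,
    Real.rpow_neg hμ.le]
  have := Real.rpow_pos_of_pos hμ a
  have := Real.rpow_pos_of_pos hr a
  have := Real.rpow_pos_of_pos hP c
  field_simp

lemma zMu_eq_bubbleProfile {N : ℕ} {s lam μ : ℝ} (hμ : 0 < μ) {x : Eucl N} (hx : x ≠ 0) :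
    zMu N s lam μ x
      = bubbleProfile (Aconst N s lam ^ (((N : ℝ) - 2) / (2 * (2 - s)))
          * μ ^ (aLam N lam - ((N : ℝ) - 2) / 2))
        (μ ^ (-((2 - s) * (1 - 2 * aLam N lam / ((N : ℝ) - 2)))))
        (-aLam N lam / 2) (((N : ℝ) - 2) / (2 - s))
        ((2 - s) * (1 - 2 * aLam N lam / ((N : ℝ) - 2)) / 2) (‖x‖ ^ 2) := by
  rw [zMu, z1, norm_smul, Real.norm_eq_abs, abs_of_pos (inv_pos.2 hμ),
    scaled_bubble_eq_bubbleProfile hμ (norm_pos_iff.2 hx)]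

lemma sqrt_lamN {N : ℕ} (hN : 2 ≤ N) : Real.sqrt (lamN N) = ((N : ℝ) - 2) / 2 := by
  have : (2 : ℝ) ≤ N := by exact_mod_cast hN
  rw [lamN, show ((N : ℝ) - 2) ^ 2 / 4 = (((N : ℝ) - 2) / 2) ^ 2 by ring,
    Real.sqrt_sq (by linarith)]

lemma lam_eq_aLam_mul {N : ℕ} {lam : ℝ} (hN : 2 ≤ N) (hl : lam ≤ lamN N) :
    lam = aLam N lam * ((N : ℝ) - 2 - aLam N lam) := by
  have hsq := Real.sq_sqrt (sub_nonneg.2 hl)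
  rw [aLam, sqrt_lamN hN]
  rw [lamN] at hsq ⊢
  linear_combination hsq

lemma Aconst_eq {N : ℕ} {s lam : ℝ} (hN : 2 < N) (hl : lam ≤ lamN N) :
    Aconst N s lam = ((N : ℝ) - 2 - 2 * aLam N lam) ^ 2 * ((N : ℝ) - s) / ((N : ℝ) - 2) := by
  have hN' : (2 : ℝ) < N := by exact_mod_cast hN
  have hsq := Real.sq_sqrt (sub_nonneg.2 hl)
  rw [Aconst, aLam, sqrt_lamN hN.le]
  have : (N : ℝ) - 2 ≠ 0 := by linarith
  field_simp
  linear_combination (-(4 : ℝ) * ((N : ℝ) - s)) * hsq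

lemma Aconst_pos {N : ℕ} {s lam : ℝ} (hN : 2 < N) (hs : s < N) (hl : lam < lamN N) :
    0 < Aconst N s lam := by
  have hN' : (2 : ℝ) < N := by exact_mod_cast hN
  rw [Aconst, sqrt_lamN hN.le]
  have := sub_pos.2 hl
  have := sub_pos.2 hs
  have : (0 : ℝ) < (N - 2) / 2 := by linarith
  positivity

theorem statement18_general
    (N : ℕ) (hN : 3 ≤ N) (s : ℝ) (hs2 : s < 2)
    (lam : ℝ) (hl' : lam < lamN N) (μ : ℝ) (hμ : 0 < μ) :
    ContDiffOn ℝ (⊤ : ℕ∞) (zMu N s lam μ) {x : Eucl N | x ≠ 0} ∧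
    ∀ x : Eucl N, x ≠ 0 →
      0 < zMu N s lam μ x ∧
      - laplacian N (zMu N s lam μ) x - lam * zMu N s lam μ x / ‖x‖ ^ 2 =
        (zMu N s lam μ x) ^ (twoStar N s - 1) / ‖x‖ ^ s := by
  have hN2 : 2 < N := by omega
  have hN' : (2 : ℝ) < N := by exact_mod_cast hN2
  have hA := Aconst_pos (s := s) hN2 (by linarith) hl'
  set a := aLam N lam
  set b := (2 - s) * (1 - 2 * a / ((N : ℝ) - 2))
  set K := Aconst N s lam ^ (((N : ℝ) - 2) / (2 * (2 - s))) * μ ^ (a - ((N : ℝ) - 2) / 2)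
  set G := bubbleProfile K (μ ^ (-b)) (-a / 2) (((N : ℝ) - 2) / (2 - s)) (b / 2)
  have hK : 0 < K := by positivity
  have hm : 0 ≤ μ ^ (-b) := by positivity
  have hz : ∀ x : Eucl N, x ≠ 0 → zMu N s lam μ =ᶠ[𝓝 x] fun y => G (‖y‖ ^ 2) := fun x hx =>
    eventually_ne_nhds hx |>.mono fun y hy => zMu_eq_bubbleProfile hμ hy
  refine ⟨fun x hx => ?_, fun x hx => ?_⟩
  · exact ((contDiffAt_bubbleProfile hm (by positivity)).comp x
      (contDiff_norm_sq ℝ).contDiffAt).congr_of_eventuallyEq (hz x hx) |>.contDiffWithinAt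
  · have ht : 0 < ‖x‖ ^ 2 := by positivity
    rw [laplacian_congr_of_eventuallyEq (hz x hx),
      laplacian_comp_norm_sq ((eventually_gt_nhds ht).mono fun _ h => hasDerivAt_bubbleProfile hm h)
        (hasDerivAt_bubbleProfileDeriv hm ht), (hz x hx).eq_of_nhds,
      ← sq_rpow_half (norm_nonneg x)]
    refine ⟨bubbleProfile_pos hK hm ht, bubbleProfile_radial_equation hN'.ne' hs2.ne rfl rfl rfl
      (lam_eq_aLam_mul hN2.le hl'.le) hK hm ht ?_⟩
    rw [bubble_constant_rpow hN'.ne' hs2.ne hA.le hμ, Aconst_eq hN2 hl'.le]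

theorem statement18
    (N : ℕ) (hN : 3 ≤ N) (s : ℝ) (hs0 : 0 < s) (hs2 : s < 2)
    (lam : ℝ) (hl : 0 < lam) (hl' : lam < lamN N) (μ : ℝ) (hμ : 0 < μ) :
    ContDiffOn ℝ (⊤ : ℕ∞) (zMu N s lam μ) {x : Eucl N | x ≠ 0} ∧
    ∀ x : Eucl N, x ≠ 0 →
      0 < zMu N s lam μ x ∧
      - laplacian N (zMu N s lam μ) x - lam * zMu N s lam μ x / ‖x‖ ^ 2 =
        (zMu N s lam μ x) ^ (twoStar N s - 1) / ‖x‖ ^ s :=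
  statement18_general N hN s hs2 lam hl' μ hμ
end
end
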